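/- Let A ∈ ℝ^{m×n} with ‖a_j‖ = 1 for all j ∈ [n]. Let x ∈ ℝ^n satisfy x_j ≥ 1 for all j ∈ [n]. If ‖Ax‖ < |ρ_{(A,−A)}|, where (A,−A) is the m×2n matrix obtained by concatenating the columns of A and of −A, then every coordinate of the orthogonal projection of x onto ker(A) is strictly positive. In particular, if ρ_A < 0, then the orthogonal projection of x onto ker(A) is strictly positive in every coordinate whenever ‖Ax‖ < |ρ_A|. -/

import Mathlib

open Matrix Set MeasureTheory Pointwise ENNReal

noncomputable section

/-- Euclidean dot product on `Fin d → ℝ`. -/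
def dotp {d : ℕ} (u v : Fin d → ℝ) : ℝ := ∑ i, u i * v i

/-- Euclidean norm on `Fin d → ℝ`. -/
def norm2 {d : ℕ} (v : Fin d → ℝ) : ℝ := Real.sqrt (∑ i, v i ^ 2)

/-- Normalization `v / ‖v‖`, with the convention that `0` is mapped to `0`. -/
def nml {d : ℕ} (v : Fin d → ℝ) : Fin d → ℝ := (norm2 v)⁻¹ • v

/-- The `j`-th column of a matrix. -/
def mcol {d : ℕ} {ι : Type} (A : Matrix (Fin d) ι ℝ) (j : ι) : Fin d → ℝ := fun i => A i j

/-- Goffin's condition measure `ρ_A = max_{y ∈ im(A) \ {0}} min_j â_jᵀ ŷ`. -/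
def goffin {d : ℕ} {ι : Type} [Fintype ι] (A : Matrix (Fin d) ι ℝ) : ℝ :=
  sSup { r : ℝ | ∃ y : Fin d → ℝ, (∃ x : ι → ℝ, A.mulVec x = y) ∧ y ≠ 0 ∧
    r = ⨅ j : ι, dotp (nml (mcol A j)) (nml y) }

/-- The cone `Σ_A = {y : Aᵀ y ≥ 0}`. -/
def SigmaCone {d : ℕ} {ι : Type} (A : Matrix (Fin d) ι ℝ) : Set (Fin d → ℝ) :=
  { y | ∀ j, 0 ≤ dotp (mcol A j) y }

/-- `F_A = Σ_A ∩ B^d`. -/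
def FA {d : ℕ} {ι : Type} (A : Matrix (Fin d) ι ℝ) : Set (Fin d → ℝ) :=
  SigmaCone A ∩ { z | norm2 z ≤ 1 }

/-- `‖v‖_M = √(vᵀ M v)`. -/
def qnorm {d : ℕ} (M : Matrix (Fin d) (Fin d) ℝ) (v : Fin d → ℝ) : ℝ :=
  Real.sqrt (dotp v (M.mulVec v))

/-- The ellipsoid `E(M) = {z : ‖z‖_M ≤ 1}`. -/
def ell {d : ℕ} (M : Matrix (Fin d) (Fin d) ℝ) : Set (Fin d → ℝ) :=
  { z | qnorm M z ≤ 1 }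

/-- The width of a set `X` along `a`: `sup {aᵀz : z ∈ X}`. -/
def widthOf {d : ℕ} (X : Set (Fin d → ℝ)) (a : Fin d → ℝ) : ℝ :=
  sSup { r : ℝ | ∃ z ∈ X, r = dotp a z }

/-- `P_A = conv(â_1,…,â_n) ∩ (−conv(â_1,…,â_n))`. -/
def PA {d : ℕ} {ι : Type} (A : Matrix (Fin d) ι ℝ) : Set (Fin d → ℝ) :=
  convexHull ℝ (Set.range fun j => nml (mcol A j)) ∩
    (-(convexHull ℝ (Set.range fun j => nml (mcol A j))))

/-- `Δ_A`: maximum of `∏_{j ∈ B} ‖a_j‖` over sets `B` of linearly independent columns. -/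
def DeltaA {d n : ℕ} (A : Matrix (Fin d) (Fin n) ℝ) : ℝ :=
  sSup { p : ℝ | ∃ B : Finset (Fin n),
    LinearIndependent ℝ (fun j : {x // x ∈ B} => mcol A j.1) ∧ p = ∏ j ∈ B, norm2 (mcol A j) }

/-- `T*_A`: indices `i` such that some `y` with `Aᵀy ≥ 0` has `a_iᵀ y > 0`. -/
def TstarA {d : ℕ} {ι : Type} (A : Matrix (Fin d) ι ℝ) : Set ι :=
  { i | ∃ y : Fin d → ℝ, (∀ j, 0 ≤ dotp (mcol A j) y) ∧ 0 < dotp (mcol A i) y }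

/-- `S*_A`: indices `i` such that some `x ≥ 0` with `Ax = 0` has `x_i > 0`. -/
def SstarA {d : ℕ} {ι : Type} [Fintype ι] (A : Matrix (Fin d) ι ℝ) : Set ι :=
  { i | ∃ x : ι → ℝ, (∀ j, 0 ≤ x j) ∧ A.mulVec x = 0 ∧ 0 < x i }

/-- `ω_A = min_{i ∈ T*_A} width_{F_A}(â_i)`. -/
def omegaA {d : ℕ} {ι : Type} (A : Matrix (Fin d) ι ℝ) : ℝ :=
  sInf ((fun i => widthOf (FA A) (nml (mcol A i))) '' TstarA A)

/-- `p` is the orthogonal projection of `x` onto `ker(A)` (w.r.t. the standard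
Euclidean inner product): `p ∈ ker(A)` and `x - p ⟂ ker(A)`. -/
def IsKerProj {m n : ℕ} (A : Matrix (Fin m) (Fin n) ℝ) (x p : Fin n → ℝ) : Prop :=
  A.mulVec p = 0 ∧ ∀ z : Fin n → ℝ, A.mulVec z = 0 → dotp (x - p) z = 0

/-!
Write `x - p = Aᵀ y` with `y ∈ im A`, possible because `ker(A)ᗮ` is the row space of `A`.
If `p_j ≤ 0` then `(x - p)_j ≥ 1`, so `‖x - p‖ ≥ 1`. Since `p ∈ ker A`,
`‖x - p‖² = yᵀ A x ≤ ‖y‖ ‖Ax‖`. As the columns of `(A, -A)` come in pairs `±a_k`, every term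
`min_k ±a_kᵀ ŷ` of the supremum defining `ρ_{(A,-A)}` equals `-max_k |a_kᵀ ŷ| ≤ 0`, so
`‖y‖ |ρ_{(A,-A)}| ≤ max_k |(x - p)_k| ≤ ‖x - p‖`. With `‖Ax‖ < |ρ_{(A,-A)}|` this gives
`‖x - p‖² < ‖x - p‖`, a contradiction. For the second claim, `(A, -A)` has the same image as `A`
and more columns, so `ρ_{(A,-A)} ≤ ρ_A`.
-/

lemma dotp_eq_dotProduct {d : ℕ} (u v : Fin d → ℝ) : dotp u v = u ⬝ᵥ v := rfl

lemma norm2_eq_norm {d : ℕ} (v : Fin d → ℝ) : norm2 v = ‖WithLp.toLp 2 v‖ := by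
  simp [norm2, EuclideanSpace.norm_eq]

lemma dotp_eq_inner {d : ℕ} (u v : Fin d → ℝ) :
    dotp u v = inner ℝ (WithLp.toLp 2 u) (WithLp.toLp 2 v) := by
  simp [dotp, EuclideanSpace.inner_toLp_toLp, dotProduct, mul_comm]

lemma dotp_neg_left {d : ℕ} (u v : Fin d → ℝ) : dotp (-u) v = -dotp u v := by
  simp [dotp]

lemma dotp_le_norm2_mul_norm2 {d : ℕ} (u v : Fin d → ℝ) : dotp u v ≤ norm2 u * norm2 v := by
  rw [dotp_eq_inner, norm2_eq_norm, norm2_eq_norm]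
  exact real_inner_le_norm _ _

lemma dotp_self_eq_norm2_sq {d : ℕ} (v : Fin d → ℝ) : dotp v v = norm2 v ^ 2 := by
  rw [dotp_eq_inner, norm2_eq_norm, real_inner_self_eq_norm_sq]

lemma abs_le_norm2 {d : ℕ} (v : Fin d → ℝ) (i : Fin d) : |v i| ≤ norm2 v := by
  simpa [norm2_eq_norm] using PiLp.norm_apply_le (WithLp.toLp 2 v) i

lemma norm2_nonneg {d : ℕ} (v : Fin d → ℝ) : 0 ≤ norm2 v := Real.sqrt_nonneg _

lemma norm2_pos {d : ℕ} {v : Fin d → ℝ} (hv : v ≠ 0) : 0 < norm2 v := by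
  simpa [norm2_eq_norm] using hv

lemma norm2_neg {d : ℕ} (v : Fin d → ℝ) : norm2 (-v) = norm2 v := by
  simp [norm2_eq_norm]

lemma nml_neg {d : ℕ} (v : Fin d → ℝ) : nml (-v) = -nml v := by
  simp [nml, norm2_neg]

lemma nml_eq_self {d : ℕ} {v : Fin d → ℝ} (hv : norm2 v = 1) : nml v = v := by
  simp [nml, hv]

lemma dotp_nml_right {d : ℕ} (u v : Fin d → ℝ) :
    dotp u (nml v) = (norm2 v)⁻¹ * dotp u v := by
  simp [nml, dotp_eq_inner, inner_smul_right]

lemma norm2_nml_le_one {d : ℕ} (v : Fin d → ℝ) : norm2 (nml v) ≤ 1 := by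
  rcases eq_or_ne v 0 with rfl | hv
  · simp [nml, norm2]
  · simp [nml, norm2_eq_norm, norm_smul, hv]

@[simp]
lemma mcol_fromCols_inl {d : ℕ} {ι κ : Type} (A : Matrix (Fin d) ι ℝ) (B : Matrix (Fin d) κ ℝ)
    (j : ι) :
    mcol (fromCols A B) (Sum.inl j) = mcol A j := rfl

@[simp]
lemma mcol_fromCols_inr {d : ℕ} {ι κ : Type} (A : Matrix (Fin d) ι ℝ) (B : Matrix (Fin d) κ ℝ)
    (j : κ) :
    mcol (fromCols A B) (Sum.inr j) = mcol B j := rfl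

@[simp]
lemma mcol_neg {d : ℕ} {ι : Type} (A : Matrix (Fin d) ι ℝ) (j : ι) :
    mcol (-A) j = -mcol A j := rfl

section Goffin

variable {d : ℕ} {ι : Type} [Fintype ι]

lemma goffin_eq_iSup (B : Matrix (Fin d) ι ℝ) :
    goffin B = ⨆ y : {y // y ∈ Set.range B.mulVec ∧ y ≠ 0},
      ⨅ j, dotp (nml (mcol B j)) (nml y.1) := by
  unfold goffin iSup
  congr 1
  ext r
  simp [eq_comm, and_assoc]

lemma bddAbove_range_iInf_dotp_nml [Nonempty ι] (a : ι → Fin d → ℝ) (S : Set (Fin d → ℝ)) :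
    BddAbove (Set.range fun y : S => ⨅ j, dotp (nml (a j)) (nml y.1)) := by
  refine ⟨1, Set.forall_mem_range.2 fun y => ?_⟩
  obtain ⟨j⟩ := ‹Nonempty ι›
  calc ⨅ j, dotp (nml (a j)) (nml y.1) ≤ dotp (nml (a j)) (nml y.1) :=
        ciInf_le (Set.finite_range _).bddBelow j
    _ ≤ norm2 (nml (a j)) * norm2 (nml y.1) := dotp_le_norm2_mul_norm2 _ _
    _ ≤ 1 := mul_le_one₀ (norm2_nml_le_one _) (norm2_nonneg _) (norm2_nml_le_one _)

lemma iInf_le_goffin [Nonempty ι] (B : Matrix (Fin d) ι ℝ) {y : Fin d → ℝ}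
    (hy : y ∈ Set.range B.mulVec) (hy0 : y ≠ 0) :
    ⨅ j, dotp (nml (mcol B j)) (nml y) ≤ goffin B := by
  rw [goffin_eq_iSup]
  exact le_ciSup (f := fun y : {y // y ∈ Set.range B.mulVec ∧ y ≠ 0} => _)
    (bddAbove_range_iInf_dotp_nml _ _) ⟨y, hy, hy0⟩

lemma range_mulVec_fromCols_neg (A : Matrix (Fin d) ι ℝ) :
    Set.range (fromCols A (-A)).mulVec = Set.range A.mulVec := by
  ext y
  constructor
  · rintro ⟨x, rfl⟩
    refine ⟨fun j => x (Sum.inl j) - x (Sum.inr j), ?_⟩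
    rw [← Sum.elim_comp_inl_inr x, fromCols_mulVec_sumElim, neg_mulVec, ← sub_eq_add_neg,
      ← mulVec_sub]
    rfl
  · rintro ⟨x, rfl⟩
    exact ⟨Sum.elim x 0, by simp⟩

lemma goffin_fromCols_neg_nonpos [Nonempty ι] (A : Matrix (Fin d) ι ℝ) :
    goffin (fromCols A (-A)) ≤ 0 := by
  rw [goffin_eq_iSup]
  refine Real.iSup_nonpos fun y => ?_
  obtain ⟨j⟩ := ‹Nonempty ι›
  have hbdd :=
    (Set.finite_range fun k => dotp (nml (mcol (fromCols A (-A)) k)) (nml y.1)).bddBelow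
  have h₁ := ciInf_le hbdd (Sum.inl j)
  have h₂ := ciInf_le hbdd (Sum.inr j)
  simp only [mcol_fromCols_inl, mcol_fromCols_inr, mcol_neg, nml_neg] at h₁ h₂
  linarith [dotp_neg_left (nml (mcol A j)) (nml y.1)]

lemma exists_abs_goffin_fromCols_neg_le [Nonempty ι] (A : Matrix (Fin d) ι ℝ) {y : Fin d → ℝ}
    (hy : y ∈ Set.range A.mulVec) (hy0 : y ≠ 0) :
    ∃ j, |goffin (fromCols A (-A))| ≤ |dotp (nml (mcol A j)) (nml y)| := by
  obtain ⟨k, hk⟩ :=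
    exists_eq_ciInf_of_finite (f := fun k => dotp (nml (mcol (fromCols A (-A)) k)) (nml y))
  have hle := hk ▸ iInf_le_goffin _ ((range_mulVec_fromCols_neg A).symm ▸ hy) hy0
  rw [abs_of_nonpos (goffin_fromCols_neg_nonpos A)]
  cases k with
  | inl j =>
    refine ⟨j, ?_⟩
    simp only [mcol_fromCols_inl] at hle
    linarith [neg_abs_le (dotp (nml (mcol A j)) (nml y))]
  | inr j =>
    refine ⟨j, ?_⟩
    simp only [mcol_fromCols_inr, mcol_neg, nml_neg, dotp_neg_left] at hle
    linarith [le_abs_self (dotp (nml (mcol A j)) (nml y))]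

lemma goffin_fromCols_neg_le_goffin [Nonempty ι] (A : Matrix (Fin d) ι ℝ) :
    goffin (fromCols A (-A)) ≤ goffin A := by
  rw [goffin_eq_iSup, goffin_eq_iSup, range_mulVec_fromCols_neg]
  refine ciSup_mono (bddAbove_range_iInf_dotp_nml _ _) fun y => le_ciInf fun j => ?_
  exact ciInf_le (Set.finite_range _).bddBelow (Sum.inl j)

lemma abs_goffin_le_abs_goffin_fromCols_neg [Nonempty ι] (A : Matrix (Fin d) ι ℝ)
    (hA : goffin A ≤ 0) : |goffin A| ≤ |goffin (fromCols A (-A))| := by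
  rw [abs_of_nonpos hA, abs_of_nonpos (goffin_fromCols_neg_nonpos A)]
  exact neg_le_neg (goffin_fromCols_neg_le_goffin A)

end Goffin

lemma exists_transpose_mulVec_mulVec_eq {m n : ℕ} (A : Matrix (Fin m) (Fin n) ℝ)
    {v : Fin n → ℝ} (hv : ∀ z, A *ᵥ z = 0 → dotp v z = 0) : ∃ u, Aᵀ *ᵥ (A *ᵥ u) = v := by
  have hmem : WithLp.toLp 2 v ∈ (LinearMap.ker (Matrix.toEuclideanLin A))ᗮ := by
    refine (Submodule.mem_orthogonal' _ _).2 fun z hz => ?_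
    simpa [dotp_eq_inner] using hv z.ofLp (congrArg WithLp.ofLp hz)
  rw [LinearMap.orthogonal_ker, ← LinearMap.range_adjoint_comp_self,
    ← Matrix.toEuclideanLin_conjTranspose_eq_adjoint] at hmem
  obtain ⟨u, hu⟩ := hmem
  exact ⟨u.ofLp, by simpa [Matrix.toLpLin_apply] using congrArg WithLp.ofLp hu⟩

lemma transpose_mulVec_apply_eq_dotp {m n : ℕ} (A : Matrix (Fin m) (Fin n) ℝ) (y : Fin m → ℝ)
    (i : Fin n) : (Aᵀ *ᵥ y) i = dotp (mcol A i) y := rfl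

lemma dotp_transpose_mulVec {m n : ℕ} (A : Matrix (Fin m) (Fin n) ℝ) (y : Fin m → ℝ)
    (z : Fin n → ℝ) : dotp (Aᵀ *ᵥ y) z = dotp y (A *ᵥ z) := by
  rw [dotp_eq_dotProduct, dotp_eq_dotProduct, mulVec_transpose, dotProduct_mulVec]

theorem pos_of_isKerProj_of_norm2_mulVec_lt {m n : ℕ} {A : Matrix (Fin m) (Fin n) ℝ}
    (hcols : ∀ j, norm2 (mcol A j) = 1) {x p : Fin n → ℝ} (hx : ∀ j, 1 ≤ x j)
    (hAx : norm2 (A *ᵥ x) < |goffin (fromCols A (-A))|) (hp : IsKerProj A x p) (j : Fin n) :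
    0 < p j := by
  obtain ⟨hp0, hperp⟩ := hp
  obtain ⟨u, hu⟩ := exists_transpose_mulVec_mulVec_eq A hperp
  set y := A *ᵥ u
  set v := x - p
  by_contra! hpj
  have hvj : 1 ≤ v j := by simp only [v, Pi.sub_apply]; linarith [hx j]
  have hy0 : y ≠ 0 := by
    intro hy
    have : v j = 0 := by rw [← hu, hy, mulVec_zero, Pi.zero_apply]
    linarith
  have : Nonempty (Fin n) := ⟨j⟩
  obtain ⟨k, hk⟩ := exists_abs_goffin_fromCols_neg_le A ⟨u, rfl⟩ hy0
  rw [nml_eq_self (hcols k), dotp_nml_right, ← transpose_mulVec_apply_eq_dotp, hu, abs_mul,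
    abs_inv, abs_of_nonneg (norm2_nonneg _)] at hk
  have hny := norm2_pos hy0
  have hρ : norm2 y * |goffin (fromCols A (-A))| ≤ norm2 v := by
    calc norm2 y * |goffin (fromCols A (-A))| ≤ |v k| := by
          rwa [le_inv_mul_iff₀ hny] at hk
      _ ≤ norm2 v := abs_le_norm2 v k
  have hv : norm2 v ^ 2 ≤ norm2 y * norm2 (A *ᵥ x) :=
    calc norm2 v ^ 2 = dotp (Aᵀ *ᵥ y) v := by rw [hu, dotp_self_eq_norm2_sq]
      _ = dotp y (A *ᵥ x) := by
        rw [dotp_transpose_mulVec, mulVec_sub, hp0, sub_zero]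
      _ ≤ norm2 y * norm2 (A *ᵥ x) := dotp_le_norm2_mul_norm2 _ _
  have hv1 : 1 ≤ norm2 v := hvj.trans ((le_abs_self _).trans (abs_le_norm2 v j))
  nlinarith [mul_lt_mul_of_pos_left hAx hny]

/-- Lemma 2.3: if all columns of `A` have unit norm, `x ≥ 1` componentwise and
`‖Ax‖ < |ρ_{(A,-A)}|`, then the orthogonal projection of `x` onto `ker(A)` is strictly
positive in every coordinate; in particular, if `ρ_A < 0`, this holds whenever
`‖Ax‖ < |ρ_A|`. -/
theorem kerProj_pos_of_small_norm
    {m n : ℕ} (A : Matrix (Fin m) (Fin n) ℝ)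
    (hcols : ∀ j, norm2 (mcol A j) = 1)
    (x : Fin n → ℝ) (hx : ∀ j, 1 ≤ x j) :
    (norm2 (A.mulVec x) < |goffin (fromCols A (-A))| →
      ∀ p : Fin n → ℝ, IsKerProj A x p → ∀ j, 0 < p j) ∧
    (goffin A < 0 → norm2 (A.mulVec x) < |goffin A| →
      ∀ p : Fin n → ℝ, IsKerProj A x p → ∀ j, 0 < p j) := by
  refine ⟨fun hAx _ hp => pos_of_isKerProj_of_norm2_mulVec_lt hcols hx hAx hp,
    fun hneg hAx _ hp j => ?_⟩
  have : Nonempty (Fin n) := ⟨j⟩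
  exact pos_of_isKerProj_of_norm2_mulVec_lt hcols hx
    (hAx.trans_le (abs_goffin_le_abs_goffin_fromCols_neg A hneg.le)) hp j
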